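/- arXiv:1507.02319 — 6 statements merged into one kernel-verified Lean document; each statement's English description precedes it below -/
import Mathlib

section
/- Explicit Cholesky factorization of tI − s s*: let s ∈ ℂ^T with s_T ≠ 0, set t = ‖s‖² and tail energies τ_i = Σ_{k=i}^T |s_k|² (with τ_{T+1} = 0). Define the upper triangular T×T matrix R by R_{i,i} = √(t · τ_{i+1}/τ_i) for 1 ≤ i ≤ T (so in particular R_{T,T} = 0), R_{i,j} = −s_i · conj(s_j) · t/(τ_i · R_{i,i}) for 1 ≤ i < j ≤ T, and R_{i,j} = 0 for i > j. Then R* R = t I − s s*. -/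
open Matrix Finset

namespace CholeskyAux

variable {n : ℕ}

/-- total energy -/
noncomputable def tts (s : Fin (n + 1) → ℂ) : ℝ := ∑ k : Fin (n + 1), Complex.normSq (s k)

/-- tail energy -/
noncomputable def tauf (s : Fin (n + 1) → ℂ) (i : Fin (n + 1)) : ℝ :=
  ∑ k ∈ Finset.Ici i, Complex.normSq (s k)

/-- strict tail energy -/
noncomputable def tauf' (s : Fin (n + 1) → ℂ) (i : Fin (n + 1)) : ℝ :=
  ∑ k ∈ Finset.Ioi i, Complex.normSq (s k)

/-- the explicit Cholesky factor -/
noncomputable def Rdef (s : Fin (n + 1) → ℂ) : Matrix (Fin (n + 1)) (Fin (n + 1)) ℂ :=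
  Matrix.of fun i j =>
    if i = j then ((Real.sqrt (tts s * tauf' s i / tauf s i) : ℝ) : ℂ)
    else if i < j then
      - s i * star (s j) * ((tts s : ℝ) : ℂ) /
        (((tauf s i : ℝ) : ℂ) * ((Real.sqrt (tts s * tauf' s i / tauf s i) : ℝ) : ℂ))
    else 0

lemma tau_pos (s : Fin (n + 1) → ℂ) (hsT : s (Fin.last n) ≠ 0) (i : Fin (n + 1)) :
    0 < tauf s i := by
  refine Finset.sum_pos' (fun k _ => Complex.normSq_nonneg _) ⟨Fin.last n, ?_, ?_⟩
  · simp [Finset.mem_Ici, Fin.le_last]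
  · exact Complex.normSq_pos.2 hsT

lemma tau'_pos (s : Fin (n + 1) → ℂ) (hsT : s (Fin.last n) ≠ 0) (i : Fin (n + 1))
    (hi : i < Fin.last n) : 0 < tauf' s i := by
  refine Finset.sum_pos' (fun k _ => Complex.normSq_nonneg _) ⟨Fin.last n, ?_, ?_⟩
  · simpa [Finset.mem_Ioi] using hi
  · exact Complex.normSq_pos.2 hsT

lemma tau'_nonneg (s : Fin (n + 1) → ℂ) (i : Fin (n + 1)) : 0 ≤ tauf' s i :=
  Finset.sum_nonneg fun k _ => Complex.normSq_nonneg _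

lemma tau_eq (s : Fin (n + 1) → ℂ) (i : Fin (n + 1)) :
    tauf s i = Complex.normSq (s i) + tauf' s i := by
  rw [tauf, tauf', ← Finset.Ioi_insert, Finset.sum_insert (by simp)]

lemma tau_zero (s : Fin (n + 1) → ℂ) : tauf s 0 = tts s := by
  rw [tauf, tts]
  apply Finset.sum_subset (Finset.subset_univ _)
  intro x _ hx
  exact absurd (Fin.zero_le x) (by simpa using hx)

lemma tts_pos (s : Fin (n + 1) → ℂ) (hsT : s (Fin.last n) ≠ 0) : 0 < tts s :=
  tau_zero s ▸ tau_pos s hsT 0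

lemma tau'_castSucc (s : Fin (n + 1) → ℂ) (i : Fin n) :
    tauf' s i.castSucc = tauf s i.succ := by
  rw [tauf, tauf']
  congr 1
  ext j
  simp [Finset.mem_Ioi, Finset.mem_Ici, Fin.castSucc_lt_iff_succ_le]

lemma Iio_succ_eq (i : Fin n) :
    Finset.Iio (i.succ : Fin (n + 1)) = insert i.castSucc (Finset.Iio i.castSucc) := by
  rw [Finset.Iio_insert]
  ext j
  simp only [Finset.mem_Iio, Finset.mem_Iic, Fin.lt_def, Fin.le_def, Fin.val_succ,
    Fin.coe_castSucc]
  omega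

/-- Telescoping sum. -/
lemma tele (s : Fin (n + 1) → ℂ) (hsT : s (Fin.last n) ≠ 0) (i : Fin (n + 1)) :
    ∑ k ∈ Finset.Iio i, (tts s / tauf' s k - tts s / tauf s k)
      = tts s / tauf s i - 1 := by
  induction i using Fin.induction with
  | zero =>
      have hempty : Finset.Iio (0 : Fin (n + 1)) = ∅ := by
        ext j; simp [Fin.not_lt_zero j]
      rw [hempty, Finset.sum_empty, tau_zero, div_self (ne_of_gt (tts_pos s hsT))]
      ring
  | succ i ih =>
      rw [Iio_succ_eq,
        Finset.sum_insert (by simp only [Finset.mem_Iio, lt_self_iff_false, not_false_iff]),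
        ih, tau'_castSucc]
      ring

/-- generic scalar computation for the strictly-upper-triangular terms -/
lemma star_off_mul_off (a u v : ℂ) (t τ r τ' : ℝ) (ht : t ≠ 0) (hτ : τ ≠ 0) (hτ' : τ' ≠ 0)
    (hr2 : r ^ 2 = t * τ' / τ) (hns : (starRingEnd ℂ) a * a = ((τ - τ' : ℝ) : ℂ)) :
    star (-a * star u * ((t : ℝ) : ℂ) / (((τ : ℝ) : ℂ) * ((r : ℝ) : ℂ))) *
      (-a * star v * ((t : ℝ) : ℂ) / (((τ : ℝ) : ℂ) * ((r : ℝ) : ℂ)))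
      = u * star v * ((t / τ' - t / τ : ℝ) : ℂ) := by
  have hrc2 : ((r : ℂ)) ^ 2 * (τ : ℂ) = (t : ℂ) * (τ' : ℂ) := by
    have h : r ^ 2 * τ = t * τ' := by rw [hr2]; field_simp
    exact_mod_cast congrArg Complex.ofReal h
  have htc : ((t : ℝ) : ℂ) ≠ 0 := Complex.ofReal_ne_zero.2 ht
  have hτc : ((τ : ℝ) : ℂ) ≠ 0 := Complex.ofReal_ne_zero.2 hτ
  have hτ'c : ((τ' : ℝ) : ℂ) ≠ 0 := Complex.ofReal_ne_zero.2 hτ'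
  push_cast at hns
  simp only [Complex.star_def, map_div₀, _root_.map_mul, map_neg, Complex.conj_conj,
    Complex.conj_ofReal]
  rw [div_mul_div_comm]
  have hnum : -(starRingEnd ℂ) a * u * ((t : ℝ) : ℂ) * (-a * (starRingEnd ℂ) v * ((t : ℝ) : ℂ))
      = u * (starRingEnd ℂ) v * (((τ : ℝ) : ℂ) - ((τ' : ℝ) : ℂ)) * ((t : ℝ) : ℂ) ^ 2 := by
    linear_combination u * (starRingEnd ℂ) v * ((t : ℝ) : ℂ) ^ 2 * hns
  have hden : (((τ : ℝ) : ℂ) * ((r : ℝ) : ℂ)) * (((τ : ℝ) : ℂ) * ((r : ℝ) : ℂ))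
      = ((τ : ℝ) : ℂ) * ((t : ℝ) : ℂ) * ((τ' : ℝ) : ℂ) := by
    linear_combination ((τ : ℝ) : ℂ) * hrc2
  rw [hnum, hden]
  rw [div_eq_iff (by simp [hτc, htc, hτ'c])]
  push_cast
  field_simp

lemma conj_mul_self (z : ℂ) : (starRingEnd ℂ) z * z = ((Complex.normSq z : ℝ) : ℂ) := by
  rw [mul_comm]; exact Complex.mul_conj z

/-- the sum over `k < i` -/
lemma lower_sum (s : Fin (n + 1) → ℂ) (hsT : s (Fin.last n) ≠ 0) {i j : Fin (n + 1)}
    (hij : i ≤ j) :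
    ∑ k ∈ Finset.Iio i, star (Rdef s k i) * Rdef s k j
      = s i * star (s j) * ((tts s / tauf s i - 1 : ℝ) : ℂ) := by
  have hstep : ∀ k ∈ Finset.Iio i, star (Rdef s k i) * Rdef s k j
      = s i * star (s j) * ((tts s / tauf' s k - tts s / tauf s k : ℝ) : ℂ) := by
    intro k hk
    rw [Finset.mem_Iio] at hk
    have hki : k ≠ i := ne_of_lt hk
    have hkj : k < j := lt_of_lt_of_le hk hij
    have hkj' : k ≠ j := ne_of_lt hkj
    have hklast : k < Fin.last n := lt_of_lt_of_le hk (le_trans hij (Fin.le_last j))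
    have h1 : Rdef s k i = -s k * star (s i) * ((tts s : ℝ) : ℂ) /
        (((tauf s k : ℝ) : ℂ) * ((Real.sqrt (tts s * tauf' s k / tauf s k) : ℝ) : ℂ)) := by
      simp [Rdef, hki, hk]
    have h2 : Rdef s k j = -s k * star (s j) * ((tts s : ℝ) : ℂ) /
        (((tauf s k : ℝ) : ℂ) * ((Real.sqrt (tts s * tauf' s k / tauf s k) : ℝ) : ℂ)) := by
      simp [Rdef, hkj', hkj]
    rw [h1, h2]
    refine star_off_mul_off (s k) (s i) (s j) (tts s) (tauf s k) _ (tauf' s k)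
      (ne_of_gt (tts_pos s hsT)) (ne_of_gt (tau_pos s hsT k))
      (ne_of_gt (tau'_pos s hsT k hklast)) ?_ ?_
    · exact Real.sq_sqrt (div_nonneg (mul_nonneg (tts_pos s hsT).le (tau'_nonneg s k))
        (tau_pos s hsT k).le)
    · rw [conj_mul_self, tau_eq s k]; push_cast; ring
  rw [Finset.sum_congr rfl hstep, ← Finset.mul_sum]
  congr 1
  rw [← tele s hsT i]
  push_cast
  ring

/-- single entry of `Rᴴ R` for `i ≤ j`. -/
lemma entry_le (s : Fin (n + 1) → ℂ) (hsT : s (Fin.last n) ≠ 0) {i j : Fin (n + 1)}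
    (hij : i ≤ j) :
    ∑ k, star (Rdef s k i) * Rdef s k j
      = (if i = j then ((tts s : ℝ) : ℂ) else 0) - s i * star (s j) := by
  have hzero : ∀ k ∈ Finset.univ, k ∉ Finset.Iic i → star (Rdef s k i) * Rdef s k j = 0 := by
    intro k _ hk
    have hik : i < k := by simpa using hk
    have h1 : Rdef s k i = 0 := by
      simp [Rdef, (ne_of_lt hik).symm, not_lt.2 hik.le]
    rw [h1, star_zero, zero_mul]
  rw [← Finset.sum_subset (Finset.subset_univ _) hzero, ← Finset.Iio_insert,
    Finset.sum_insert (by simp), lower_sum s hsT hij]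
  have ht : (0:ℝ) < tts s := tts_pos s hsT
  have hτ : (0:ℝ) < tauf s i := tau_pos s hsT i
  rcases eq_or_lt_of_le hij with rfl | hlt
  · -- diagonal
    have hdiag : Rdef s i i = ((Real.sqrt (tts s * tauf' s i / tauf s i) : ℝ) : ℂ) := by
      simp [Rdef]
    rw [hdiag, if_pos rfl]
    have hsq : (Real.sqrt (tts s * tauf' s i / tauf s i)) * Real.sqrt (tts s * tauf' s i / tauf s i)
        = tts s * tauf' s i / tauf s i :=
      Real.mul_self_sqrt (div_nonneg (mul_nonneg ht.le (tau'_nonneg s i)) hτ.le)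
    have hstar : star ((Real.sqrt (tts s * tauf' s i / tauf s i) : ℝ) : ℂ)
        = ((Real.sqrt (tts s * tauf' s i / tauf s i) : ℝ) : ℂ) := by
      simp [Complex.star_def, Complex.conj_ofReal]
    rw [hstar, show s i * star (s i) = ((Complex.normSq (s i) : ℝ) : ℂ) from Complex.mul_conj (s i)]
    rw [← Complex.ofReal_mul, hsq]
    norm_cast
    have hτeq := tau_eq s i
    field_simp
    linear_combination (- tts s) * hτeq
  · -- strictly above diagonal
    have hij' : i ≠ j := ne_of_lt hlt
    have hilast : i < Fin.last n := lt_of_lt_of_le hlt (Fin.le_last j)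
    have hτ' : (0:ℝ) < tauf' s i := tau'_pos s hsT i hilast
    have hrpos : (0:ℝ) < Real.sqrt (tts s * tauf' s i / tauf s i) :=
      Real.sqrt_pos.2 (div_pos (mul_pos ht hτ') hτ)
    have hdiag : Rdef s i i = ((Real.sqrt (tts s * tauf' s i / tauf s i) : ℝ) : ℂ) := by
      simp [Rdef]
    have hoff : Rdef s i j = -s i * star (s j) * ((tts s : ℝ) : ℂ) /
        (((tauf s i : ℝ) : ℂ) * ((Real.sqrt (tts s * tauf' s i / tauf s i) : ℝ) : ℂ)) := by
      simp [Rdef, hij', hlt]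
    rw [hdiag, hoff, if_neg hij']
    have hstar : star ((Real.sqrt (tts s * tauf' s i / tauf s i) : ℝ) : ℂ)
        = ((Real.sqrt (tts s * tauf' s i / tauf s i) : ℝ) : ℂ) := by
      simp [Complex.star_def, Complex.conj_ofReal]
    rw [hstar]
    have hrc : ((Real.sqrt (tts s * tauf' s i / tauf s i) : ℝ) : ℂ) ≠ 0 :=
      Complex.ofReal_ne_zero.2 (ne_of_gt hrpos)
    have hτc : ((tauf s i : ℝ) : ℂ) ≠ 0 := Complex.ofReal_ne_zero.2 (ne_of_gt hτ)
    have hcancel : ((Real.sqrt (tts s * tauf' s i / tauf s i) : ℝ) : ℂ) *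
        (-s i * star (s j) * ((tts s : ℝ) : ℂ) /
          (((tauf s i : ℝ) : ℂ) * ((Real.sqrt (tts s * tauf' s i / tauf s i) : ℝ) : ℂ)))
        = -s i * star (s j) * ((tts s : ℝ) : ℂ) / ((tauf s i : ℝ) : ℂ) := by
      rw [mul_comm (((tauf s i : ℝ) : ℂ)), ← mul_div_assoc]
      exact mul_div_mul_left _ _ hrc
    rw [hcancel, Complex.ofReal_sub, Complex.ofReal_div, Complex.ofReal_one]
    field_simp
    ring

lemma main (s : Fin (n + 1) → ℂ) (hsT : s (Fin.last n) ≠ 0) :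
    (Rdef s)ᴴ * Rdef s = ((tts s : ℝ) : ℂ) • (1 : Matrix (Fin (n+1)) (Fin (n+1)) ℂ) -
      Matrix.of fun i j => s i * star (s j) := by
  ext i j
  rw [Matrix.mul_apply]
  simp only [Matrix.conjTranspose_apply, Matrix.sub_apply, Matrix.smul_apply,
    Matrix.of_apply, Matrix.one_apply, smul_eq_mul, mul_ite, mul_one, mul_zero]
  rcases le_or_gt i j with hij | hji
  · exact entry_le s hsT hij
  · have h2 := entry_le s hsT hji.le
    calc ∑ k, star (Rdef s k i) * Rdef s k j
        = star (∑ k, star (Rdef s k j) * Rdef s k i) := by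
          rw [star_sum]
          exact Finset.sum_congr rfl fun k _ => by rw [StarMul.star_mul, star_star]
      _ = _ := by
          rw [h2, if_neg (ne_of_lt hji)]
          simp [star_sub, StarMul.star_mul, star_star, ne_of_lt hji, ne_of_gt hji, mul_comm]

end CholeskyAux

/-- **Explicit Cholesky factorization of `t I − s s*`.**
Let `s ∈ ℂ^T` (here `T = n+1`) with last component nonzero, `t = ‖s‖²`, and tail
energies `τ i = ∑_{k ≥ i} |s_k|²` (so the "`τ_{i+1}`" of the paper is `∑_{k > i} |s_k|²`).
The explicitly given upper triangular matrix `R` with `R i i = √(t · τ_{i+1} / τ_i)`,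
`R i j = − s_i conj(s_j) t / (τ_i R_{i,i})` for `i < j` and `R i j = 0` for `i > j`
satisfies `R* R = t I − s s*`. -/
theorem cholesky_of_tI_sub_outer (n : ℕ) (s : Fin (n + 1) → ℂ)
    (hsT : s (Fin.last n) ≠ 0) :
    letI T := n + 1
    letI t : ℝ := ∑ k : Fin T, Complex.normSq (s k)
    letI τ : Fin T → ℝ := fun i => ∑ k ∈ Finset.Ici i, Complex.normSq (s k)
    letI τ' : Fin T → ℝ := fun i => ∑ k ∈ Finset.Ioi i, Complex.normSq (s k)
    letI R : Matrix (Fin T) (Fin T) ℂ := Matrix.of fun i j =>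
      if i = j then ((Real.sqrt (t * τ' i / τ i) : ℝ) : ℂ)
      else if i < j then
        - s i * star (s j) * (t : ℂ) / (((τ i : ℝ) : ℂ) * ((Real.sqrt (t * τ' i / τ i) : ℝ) : ℂ))
      else 0
    Rᴴ * R = ((t : ℝ) : ℂ) • (1 : Matrix (Fin T) (Fin T) ℂ) -
      Matrix.of fun i j => s i * star (s j) := by
  exact CholeskyAux.main s hsT
end

section
/- Lower bound on partial metrics of wrong sequences (constant modulus): let T ≥ 2, let Ω ⊂ ℂ be a finite set with at least two elements such that |a| = 1 for all a ∈ Ω, and let D_min = min{|a − b|² : a, b ∈ Ω, a ≠ b}. Let s, s̃ ∈ Ω^T, let i be an index with 1 ≤ i ≤ T − 1 such that s̃_i ≠ s_i and s̃_k = s_k for all k > i, and let R be an upper triangular T×T complex matrix with R* R = T·I − s s*. Then for every j with 1 ≤ j ≤ i, Σ_{l=j}^T |(R s̃)_l|² ≥ T·D_min/2. -/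
/-!
Since `|s_k| = 1`, the Gram identity `Rᴴ R = T • 1 - s sᴴ` gives `‖R s‖² = T² - T² = 0`, so
`R s̃ = R (s̃ - s)` with `s̃ - s` vanishing beyond `i`, and triangularity gives
`(R s̃)_i = R_ii (s̃_i - s_i)`; the partial metric is thus at least `|R_ii|² D_min`.
The diagonal of `R` is read off principal minors: for a lower set `S` the `S`-block of `Rᴴ R`
has determinant `∏_{k ∈ S} |R_kk|²`, and by the matrix determinant lemma `T^|S| (1 - |S|/T)`.
Comparing `S = {k < i}` with `S = {k ≤ i}` yields `|R_ii|² = T (T - i - 1) / (T - i)`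
(0-based `i`), which is at least `T / 2` because `T - i ≥ 2`.
-/

open Matrix Finset
open scoped ComplexOrder

namespace Matrix

section Field

variable {n : Type*} [Fintype n] [DecidableEq n] {α : Type*} [Field α]

theorem det_smul_one_sub_vecMulVec {c : α} (hc : c ≠ 0) (u v : n → α) :
    det (c • 1 - vecMulVec u v) = c ^ Fintype.card n * (1 - c⁻¹ * (v ⬝ᵥ u)) := by
  have : c • 1 - vecMulVec u v = c • (1 - replicateCol Unit (c⁻¹ • u) * replicateRow Unit v) := by
    rw [← vecMulVec_eq, smul_sub, smul_vecMulVec, smul_inv_smul₀ hc]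
  rw [this, det_smul, det_one_sub_mul_comm, det_unique]
  simp

theorem mulVec_eq_zero_of_conjTranspose_mul_self_eq [PartialOrder α] [StarRing α]
    [StarOrderedRing α] {m : Type*} [Fintype m] {R : Matrix m n α} {c : α} {s : n → α}
    (hR : Rᴴ * R = c • 1 - vecMulVec s (star s)) (hs : star s ⬝ᵥ s = c) : R *ᵥ s = 0 := by
  rw [← conjTranspose_mul_self_mulVec_eq_zero, hR, sub_mulVec, smul_mulVec, one_mulVec,
    vecMulVec_mulVec, hs, op_smul_eq_smul, sub_self]

end Field

namespace IsUpperTriangular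

variable {n : Type*} [Fintype n] [LinearOrder n] {α : Type*}

theorem mulVec_apply_eq_of_forall_gt [CommRing α] {R : Matrix n n α} (hR : R.IsUpperTriangular)
    {d : n → α} {i : n} (hd : ∀ k, i < k → d k = 0) :
    (R *ᵥ d) i = R i i * d i := by
  refine Finset.sum_eq_single i (fun k _ hk => ?_) (by simp)
  rcases hk.lt_or_gt with hki | hik
  · simp [hR hki]
  · simp [hd k hik]

theorem submatrix_conjTranspose_mul_self [CommRing α] [StarRing α] {R : Matrix n n α}
    (hR : R.IsUpperTriangular) {S : Finset n} (hS : IsLowerSet (S : Set n)) :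
    (Rᴴ * R).submatrix (Subtype.val : S → n) (Subtype.val : S → n) =
      (R.submatrix (Subtype.val : S → n) (Subtype.val : S → n))ᴴ *
        R.submatrix (Subtype.val : S → n) (Subtype.val : S → n) := by
  ext a b
  simp only [submatrix_apply, mul_apply, conjTranspose_apply]
  rw [Finset.sum_coe_sort S (fun l => star (R l a) * R l b)]
  refine (Finset.sum_subset (subset_univ S) fun l _ hl => ?_).symm
  have hal : (a : n) < l := lt_of_not_ge fun hla => hl (hS hla a.2)
  rw [hR hal, star_zero, zero_mul]

theorem det_submatrix_conjTranspose_mul_self [DecidableEq n] [CommRing α] [StarRing α]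
    {R : Matrix n n α} (hR : R.IsUpperTriangular) {S : Finset n} (hS : IsLowerSet (S : Set n)) :
    det ((Rᴴ * R).submatrix (Subtype.val : S → n) (Subtype.val : S → n)) =
      ∏ k ∈ S, star (R k k) * R k k := by
  have hRS : (R.submatrix (Subtype.val : S → n) (Subtype.val : S → n)).IsUpperTriangular :=
    fun _ _ h => hR h
  rw [submatrix_conjTranspose_mul_self hR hS, det_mul, det_conjTranspose,
    det_of_isUpperTriangular hRS, star_prod, ← prod_mul_distrib]
  exact Finset.prod_coe_sort S (fun k => star (R k k) * R k k)

theorem prod_star_diag_mul_diag_of_conjTranspose_mul_self_eq [DecidableEq n] [Field α] [StarRing α]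
    {R : Matrix n n α} {s : n → α} {c : α} (hR : R.IsUpperTriangular) (hc : c ≠ 0)
    (hG : Rᴴ * R = c • 1 - vecMulVec s (star s)) {S : Finset n} (hS : IsLowerSet (S : Set n)) :
    ∏ k ∈ S, star (R k k) * R k k = c ^ #S * (1 - c⁻¹ * ∑ k ∈ S, star (s k) * s k) := by
  have hsub : (c • 1 - vecMulVec s (star s)).submatrix (Subtype.val : S → n) Subtype.val =
      c • 1 - vecMulVec (fun k : S => s k) (fun k : S => star (s k)) := by
    ext a b
    simp only [submatrix_apply, sub_apply, smul_apply, one_apply, Subtype.ext_iff,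
      vecMulVec_apply, Pi.star_apply]
  rw [← det_submatrix_conjTranspose_mul_self hR hS, hG, hsub, det_smul_one_sub_vecMulVec hc,
    Fintype.card_coe, dotProduct, Finset.sum_coe_sort S (fun k => star (s k) * s k)]

theorem normSq_diag_mul_of_conjTranspose_mul_self_eq [DecidableEq n] [LocallyFiniteOrderBot n]
    {R : Matrix n n ℂ} {s : n → ℂ} {c : ℝ} (hR : R.IsUpperTriangular) (hc : c ≠ 0)
    (hG : Rᴴ * R = (c : ℂ) • 1 - vecMulVec s (star s)) (hs : ∀ k, star (s k) * s k = 1)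
    (i : n) :
    Complex.normSq (R i i) * (c - #(Iio i)) = c * (c - #(Iio i) - 1) := by
  have hstar_mul (z : ℂ) : star z * z = (Complex.normSq z : ℂ) := by
    rw [Complex.normSq_eq_conj_mul_self]; rfl
  have hprod (S : Finset n) (hS : IsLowerSet (S : Set n)) :
      ∏ k ∈ S, (Complex.normSq (R k k) : ℂ) = (c : ℂ) ^ #S * (1 - (c : ℂ)⁻¹ * #S) := by
    simp_rw [← hstar_mul]
    rw [prod_star_diag_mul_diag_of_conjTranspose_mul_self_eq hR (by exact_mod_cast hc) hG hS]
    simp only [hs, sum_const, nsmul_eq_mul, mul_one]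
  have h := hprod (Iic i) (by rw [coe_Iic]; exact isLowerSet_Iic i)
  rw [← Iio_insert, prod_insert notMem_Iio_self,
    hprod (Iio i) (by rw [coe_Iio]; exact isLowerSet_Iio i),
    card_insert_of_notMem notMem_Iio_self] at h
  have hc' : (c : ℂ) ≠ 0 := by exact_mod_cast hc
  apply Complex.ofReal_injective
  push_cast at h ⊢
  apply mul_left_cancel₀ (pow_ne_zero #(Iio i) hc')
  field_simp at h
  linear_combination h

end IsUpperTriangular

end Matrix

theorem wrong_sequence_metric_lower_bound_general (T : ℕ)
    (Ω : Finset ℂ) (hmod : ∀ a ∈ Ω, ‖a‖ = 1)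
    (Dmin : ℝ)
    (hD : IsLeast {d : ℝ | ∃ a ∈ Ω, ∃ b ∈ Ω, a ≠ b ∧ d = Complex.normSq (a - b)} Dmin)
    (s stld : Fin T → ℂ) (hs : ∀ k, s k ∈ Ω) (hstld : ∀ k, stld k ∈ Ω)
    (i : Fin T) (hi : (i : ℕ) + 1 < T)
    (hne : stld i ≠ s i) (htail : ∀ k : Fin T, i < k → stld k = s k)
    (R : Matrix (Fin T) (Fin T) ℂ)
    (hupper : ∀ a b : Fin T, b < a → R a b = 0)
    (hR : Rᴴ * R = ((T : ℂ)) • (1 : Matrix (Fin T) (Fin T) ℂ) -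
      Matrix.of fun a b => s a * star (s b)) :
    ∀ j : Fin T, j ≤ i →
      ∑ l ∈ Finset.Ici j, Complex.normSq ((R *ᵥ stld) l) ≥ (T : ℝ) * Dmin / 2 := by
  intro j hj
  have hT : 0 < T := by omega
  have hRu : R.IsUpperTriangular := fun a b h => hupper a b h
  have hG : Rᴴ * R = ((T : ℝ) : ℂ) • 1 - vecMulVec s (star s) := by
    rw [Complex.ofReal_natCast]; exact hR
  have hunit (k : Fin T) : star (s k) * s k = 1 := by
    rw [Complex.star_def, Complex.conj_mul', hmod _ (hs k), Complex.ofReal_one, one_pow]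
  have hRs : R *ᵥ s = 0 :=
    mulVec_eq_zero_of_conjTranspose_mul_self_eq hR (by
      simp only [dotProduct, Pi.star_apply, hunit, sum_const, card_univ, Fintype.card_fin,
        nsmul_eq_mul, mul_one])
  have hdiag : (T : ℝ) / 2 ≤ Complex.normSq (R i i) := by
    have h := hRu.normSq_diag_mul_of_conjTranspose_mul_self_eq (by positivity) hG hunit i
    rw [Fin.card_Iio] at h
    have : (i : ℝ) + 2 ≤ T := by exact_mod_cast hi
    nlinarith
  have hentry : (R *ᵥ stld) i = R i i * (stld i - s i) := by
    rw [← sub_zero (R *ᵥ stld), ← hRs, ← mulVec_sub]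
    exact hRu.mulVec_apply_eq_of_forall_gt fun k hk => by simp [htail k hk]
  have hDmin : Dmin ≤ Complex.normSq (stld i - s i) := hD.2 ⟨_, hstld i, _, hs i, hne, rfl⟩
  have hD0 : 0 ≤ Dmin := by
    obtain ⟨a, -, b, -, -, rfl⟩ := hD.1
    exact Complex.normSq_nonneg _
  calc (T : ℝ) * Dmin / 2 = (T / 2) * Dmin := by ring
    _ ≤ Complex.normSq (R i i) * Complex.normSq (stld i - s i) :=
        mul_le_mul hdiag hDmin hD0 (Complex.normSq_nonneg _)
    _ = Complex.normSq ((R *ᵥ stld) i) := by rw [hentry, Complex.normSq_mul]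
    _ ≤ _ := single_le_sum (fun _ _ => Complex.normSq_nonneg _) (mem_Ici.2 hj)

/-- **Lemma 1 of the paper (constant-modulus case).**
Let `Ω` be a finite constant-modulus constellation with at least two points and
minimum squared distance `Dmin`. If `s̃ ∈ Ω^T` differs from the transmitted `s ∈ Ω^T`
at a largest index `i ≤ T − 1` (indices here are `0`-based, so `1 ≤ i ≤ T−1` of the
paper becomes `(i : ℕ) + 1 < T`), and `R` is an upper triangular Cholesky factor with
`R* R = T·I − s s*`, then every partial metric `∑_{l ≥ j} |(R s̃)_l|²` for `j ≤ i` is at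
least `T·Dmin/2`. -/
theorem wrong_sequence_metric_lower_bound (T : ℕ) (hT : 2 ≤ T)
    (Ω : Finset ℂ) (hΩ : 2 ≤ Ω.card) (hmod : ∀ a ∈ Ω, ‖a‖ = 1)
    (Dmin : ℝ)
    (hD : IsLeast {d : ℝ | ∃ a ∈ Ω, ∃ b ∈ Ω, a ≠ b ∧ d = Complex.normSq (a - b)} Dmin)
    (s stld : Fin T → ℂ) (hs : ∀ k, s k ∈ Ω) (hstld : ∀ k, stld k ∈ Ω)
    (i : Fin T) (hi : (i : ℕ) + 1 < T)
    (hne : stld i ≠ s i) (htail : ∀ k : Fin T, i < k → stld k = s k)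
    (R : Matrix (Fin T) (Fin T) ℂ)
    (hupper : ∀ a b : Fin T, b < a → R a b = 0)
    (hR : Rᴴ * R = ((T : ℂ)) • (1 : Matrix (Fin T) (Fin T) ℂ) -
      Matrix.of fun a b => s a * star (s b)) :
    ∀ j : Fin T, j ≤ i →
      ∑ l ∈ Finset.Ici j, Complex.normSq ((R *ᵥ stld) l) ≥ (T : ℝ) * Dmin / 2 :=
  wrong_sequence_metric_lower_bound_general T Ω hmod Dmin hD s stld hs hstld i hi hne htail R hupper
    hR
end

section
/- Lower bound on normalized partial metrics of wrong sequences (16-QAM): let T ≥ 2, let Ω₁₆ = {a + b·√(−1) : a, b ∈ {−3, −1, 1, 3}} ⊂ ℂ, let s, s̃ ∈ Ω₁₆^T, set t = ‖s‖², let i be an index with 1 ≤ i ≤ T − 1 such that s̃_i ≠ s_i and s̃_k = s_k for all k > i, and let R be an upper triangular T×T complex matrix with R* R = t·I − s s*. Then for every j with 1 ≤ j ≤ i, (Σ_{l=j}^T |(R s̃)_l|²)/(18·(j − 1) + Σ_{k=j}^T |s̃_k|²) ≥ 2/45. -/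
open Matrix Finset

/-- The 16-QAM constellation `{a + b·i : a, b ∈ {−3, −1, 1, 3}}`. -/
def QAM16 : Set ℂ :=
  {z : ℂ | ∃ a ∈ ({-3, -1, 1, 3} : Set ℝ), ∃ b ∈ ({-3, -1, 1, 3} : Set ℝ),
    z = (a : ℂ) + (b : ℂ) * Complex.I}

section Helpers

lemma qam_cases {x : ℝ} (hx : x ∈ ({-3, -1, 1, 3} : Set ℝ)) :
    x = -3 ∨ x = -1 ∨ x = 1 ∨ x = 3 := by simpa using hx

lemma qam_sq {x : ℝ} (hx : x ∈ ({-3, -1, 1, 3} : Set ℝ)) : x ^ 2 = 1 ∨ x ^ 2 = 9 := by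
  rcases qam_cases hx with rfl|rfl|rfl|rfl <;> norm_num

lemma qam_diff_sq {x y : ℝ} (hx : x ∈ ({-3, -1, 1, 3} : Set ℝ))
    (hy : y ∈ ({-3, -1, 1, 3} : Set ℝ)) (h : x ≠ y) : 4 ≤ (x - y) ^ 2 := by
  rcases qam_cases hx with rfl|rfl|rfl|rfl <;> rcases qam_cases hy with rfl|rfl|rfl|rfl <;>
    first | (exact absurd rfl h) | norm_num

lemma qam_normSq {z : ℂ} (hz : z ∈ QAM16) :
    2 ≤ Complex.normSq z ∧ Complex.normSq z ≤ 18 := by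
  obtain ⟨a, ha, b, hb, rfl⟩ := hz
  rw [Complex.normSq_add_mul_I]
  rcases qam_sq ha with h1|h1 <;> rcases qam_sq hb with h2|h2 <;> rw [h1, h2] <;> norm_num

lemma qam_diff_normSq {z w : ℂ} (hz : z ∈ QAM16) (hw : w ∈ QAM16) (h : z ≠ w) :
    4 ≤ Complex.normSq (z - w) := by
  obtain ⟨a, ha, b, hb, rfl⟩ := hz
  obtain ⟨a', ha', b', hb', rfl⟩ := hw
  have hzw : ((a:ℂ) + (b:ℂ) * Complex.I) - ((a':ℂ) + (b':ℂ) * Complex.I)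
      = ((a - a' : ℝ) : ℂ) + ((b - b' : ℝ) : ℂ) * Complex.I := by
    push_cast; ring
  rw [hzw, Complex.normSq_add_mul_I]
  have hab : a ≠ a' ∨ b ≠ b' := by
    by_contra hc
    push_neg at hc
    exact h (by rw [hc.1, hc.2])
  rcases hab with hab | hab
  · have := qam_diff_sq ha ha' hab
    nlinarith [sq_nonneg (b - b')]
  · have := qam_diff_sq hb hb' hab
    nlinarith [sq_nonneg (a - a')]

/-- Cauchy–Schwarz for complex sums, in terms of `normSq`. -/
lemma normSq_sum_mul_le {n : Type*} [Fintype n] (A : Finset n) (f g : n → ℂ) :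
    Complex.normSq (∑ k ∈ A, f k * g k) ≤
      (∑ k ∈ A, Complex.normSq (f k)) * (∑ k ∈ A, Complex.normSq (g k)) := by
  have h1 : norm (∑ k ∈ A, f k * g k) ≤ ∑ k ∈ A, norm (f k) * norm (g k) := by
    calc norm (∑ k ∈ A, f k * g k) ≤ ∑ k ∈ A, norm (f k * g k) := by
          simpa using norm_sum_le A (fun k => f k * g k)
      _ = ∑ k ∈ A, norm (f k) * norm (g k) := by simp [_root_.map_mul]
  have h2 := Finset.sum_mul_sq_le_sq_mul_sq A (fun k => norm (f k))
    (fun k => norm (g k))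
  have h3 : Complex.normSq (∑ k ∈ A, f k * g k)
      = norm (∑ k ∈ A, f k * g k) ^ 2 := (Complex.sq_norm _).symm
  have h4 : ∀ z : ℂ, Complex.normSq z = norm z ^ 2 := fun z => (Complex.sq_norm z).symm
  rw [h3]
  simp only [h4]
  calc norm (∑ k ∈ A, f k * g k) ^ 2
      ≤ (∑ k ∈ A, norm (f k) * norm (g k)) ^ 2 := by
        apply pow_le_pow_left₀ (norm_nonneg _) h1 2
    _ ≤ (∑ k ∈ A, norm (f k) ^ 2) * (∑ k ∈ A, norm (g k) ^ 2) := h2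

/-- Key real scalar inequality behind the bound. -/
lemma scalar_ineq (K a σ B G x y : ℝ) (hK : 0 ≤ K) (ha : 0 ≤ a)
    (hσ : 0 ≤ σ) (hB : 0 ≤ B) (hG : 0 ≤ G) (hx : 0 ≤ x) (_hy : 0 ≤ y)
    (hx2 : x ^ 2 ≤ K * B) (hy2 : y ^ 2 = σ * G) :
    G * (K + a + σ) * a ≤ (a + σ) * ((K + a + σ) * (B + G) - (x + y) ^ 2) := by
  have hP : (0:ℝ) ≤ a + σ := by linarith
  have h1 : 0 ≤ (a + σ) * (K * B - x ^ 2) := mul_nonneg hP (by linarith)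
  have hbr : 0 ≤ (a + σ) ^ 2 * B + G * σ * K - 2 * (a + σ) * x * y := by
    rcases eq_or_lt_of_le hK with hK0 | hK0
    · have hx0 : x ^ 2 ≤ 0 := by nlinarith
      have : x = 0 := by nlinarith
      subst this
      have : 0 ≤ G * σ * K := by positivity
      nlinarith [sq_nonneg (a + σ)]
    · have key : K * ((a + σ) ^ 2 * B + G * σ * K - 2 * (a + σ) * x * y)
          = ((a + σ) * x - K * y) ^ 2 + (a + σ) ^ 2 * (K * B - x ^ 2) := by
        have : K * (G * σ * K) = K ^ 2 * y ^ 2 := by rw [hy2]; ring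
        nlinarith [this]
      nlinarith [sq_nonneg ((a + σ) * x - K * y),
        mul_nonneg (sq_nonneg (a + σ)) (by linarith : 0 ≤ K * B - x ^ 2)]
  nlinarith [h1, hbr]

/-- A sum over `Fin T` of a function supported below `J` equals a sum over `Fin J`. -/
lemma sum_fin_restrict {T J : ℕ} (hJ : J ≤ T) (f : Fin T → ℂ)
    (hf : ∀ b : Fin T, J ≤ (b : ℕ) → f b = 0) :
    ∑ b : Fin T, f b = ∑ m : Fin J, f (Fin.castLE hJ m) := by
  classical
  set F : ℕ → ℂ := fun n => if h : n < T then f ⟨n, h⟩ else 0 with hF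
  have h1 : ∑ b : Fin T, f b = ∑ n ∈ Finset.range T, F n := by
    rw [← Fin.sum_univ_eq_sum_range]
    apply Finset.sum_congr rfl
    intro b _
    simp [hF, b.2]
  have h2 : ∑ n ∈ Finset.range T, F n = ∑ n ∈ Finset.range J, F n := by
    apply (Finset.sum_subset (Finset.range_subset_range.2 hJ) ?_).symm
    intro n hn hn'
    simp only [Finset.mem_range] at hn
    simp only [Finset.mem_range, not_lt] at hn'
    simp [hF, hn, hf ⟨n, hn⟩ hn']
  have h3 : ∑ n ∈ Finset.range J, F n = ∑ m : Fin J, f (Fin.castLE hJ m) := by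
    rw [← Fin.sum_univ_eq_sum_range]
    apply Finset.sum_congr rfl
    intro m _
    simp only [hF]
    rw [dif_pos (lt_of_lt_of_le m.2 hJ)]
    rfl
  rw [h1, h2, h3]

/-- Completing the square identity for the quadratic form `t‖·‖² − |⟨s,·⟩|²`. -/
lemma quad_shift {T : ℕ} (s d : Fin T → ℂ) :
    (∑ k : Fin T, Complex.normSq (s k)) * (∑ k, Complex.normSq (s k + d k)) -
        Complex.normSq (∑ k, (starRingEnd ℂ) (s k) * (s k + d k)) =
      (∑ k : Fin T, Complex.normSq (s k)) * (∑ k, Complex.normSq (d k)) -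
        Complex.normSq (∑ k, (starRingEnd ℂ) (s k) * d k) := by
  set t : ℝ := ∑ k : Fin T, Complex.normSq (s k) with ht
  set S : ℂ := ∑ k, (starRingEnd ℂ) (s k) * d k with hS
  have h1 : (∑ k, Complex.normSq (s k + d k)) = t + (∑ k, Complex.normSq (d k)) + 2 * S.re := by
    have : ∀ k : Fin T, Complex.normSq (s k + d k)
        = Complex.normSq (s k) + Complex.normSq (d k) + 2 * ((starRingEnd ℂ) (s k) * d k).re := by
      intro k
      rw [Complex.normSq_add]
      congr 2
      rw [← Complex.conj_re ((s k) * (starRingEnd ℂ) (d k))]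
      congr 1
      simp only [RingHom.map_mul, Complex.conj_conj]
    rw [Finset.sum_congr rfl fun k _ => this k]
    rw [Finset.sum_add_distrib, Finset.sum_add_distrib, ← Finset.mul_sum, ← Complex.re_sum, ← hS,
      ← ht]
  have h2 : (∑ k, (starRingEnd ℂ) (s k) * (s k + d k)) = (t : ℂ) + S := by
    have : ∀ k : Fin T, (starRingEnd ℂ) (s k) * (s k + d k)
        = ((Complex.normSq (s k) : ℝ) : ℂ) + (starRingEnd ℂ) (s k) * d k := by
      intro k
      rw [Complex.normSq_eq_conj_mul_self]
      ring
    rw [Finset.sum_congr rfl fun k _ => this k, Finset.sum_add_distrib, hS, ht]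
    push_cast
    ring
  rw [h1, h2]
  have h3 : Complex.normSq ((t : ℂ) + S) = t ^ 2 + Complex.normSq S + 2 * t * S.re := by
    rw [Complex.normSq_add]
    simp only [Complex.normSq_ofReal, Complex.mul_re, Complex.ofReal_re, Complex.ofReal_im,
      Complex.conj_re, Complex.conj_im]
    ring
  rw [h3]
  ring

end Helpers

set_option maxHeartbeats 1000000 in
/-- **Lemma 4 of the paper (16-QAM case).**
Let `s, s̃ ∈ Ω₁₆^T`, `t = ‖s‖²`, and suppose `s̃` differs from `s` at a largest index
`i ≤ T − 1` (indices here are `0`-based, so `1 ≤ i ≤ T−1` of the paper becomes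
`(i : ℕ) + 1 < T`, and the paper's `18(j−1)` becomes `18·(j : ℕ)`). If `R` is an upper
triangular Cholesky factor with `R* R = t·I − s s*`, then for every `j ≤ i` the
normalized partial metric
`(∑_{l ≥ j} |(R s̃)_l|²)/(18·(j−1) + ∑_{k ≥ j} |s̃_k|²)` is at least `2/45`. -/
theorem wrong_sequence_normalized_metric_lower_bound_QAM16 (T : ℕ) (hT : 2 ≤ T)
    (s stld : Fin T → ℂ) (hs : ∀ k, s k ∈ QAM16) (hstld : ∀ k, stld k ∈ QAM16)
    (i : Fin T) (hi : (i : ℕ) + 1 < T)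
    (hne : stld i ≠ s i) (htail : ∀ k : Fin T, i < k → stld k = s k)
    (R : Matrix (Fin T) (Fin T) ℂ)
    (hupper : ∀ a b : Fin T, b < a → R a b = 0)
    (hR : Rᴴ * R =
      (((∑ k : Fin T, Complex.normSq (s k) : ℝ) : ℂ)) • (1 : Matrix (Fin T) (Fin T) ℂ) -
        Matrix.of fun a b => s a * star (s b)) :
    ∀ j : Fin T, j ≤ i →
      (∑ l ∈ Finset.Ici j, Complex.normSq ((R *ᵥ stld) l)) /
        (18 * (j : ℕ) + ∑ k ∈ Finset.Ici j, Complex.normSq (stld k)) ≥ 2 / 45 := by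
  classical
  set t : ℝ := ∑ k : Fin T, Complex.normSq (s k) with ht
  -- the key quadratic-form identity
  have key : ∀ v : Fin T → ℂ,
      (∑ l, Complex.normSq ((R *ᵥ v) l) : ℝ) =
        t * (∑ k, Complex.normSq (v k)) -
          Complex.normSq (∑ k, (starRingEnd ℂ) (s k) * v k) := by
    intro v
    set c : ℂ := ∑ k, (starRingEnd ℂ) (s k) * v k with hc
    apply Complex.ofReal_injective
    have e1 : ((∑ l, Complex.normSq ((R *ᵥ v) l) : ℝ) : ℂ)
        = star (R *ᵥ v) ⬝ᵥ (R *ᵥ v) := by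
      simp only [dotProduct, Pi.star_apply, Complex.ofReal_sum]
      exact Finset.sum_congr rfl fun l _ => Complex.normSq_eq_conj_mul_self
    have e2 : star (R *ᵥ v) ⬝ᵥ (R *ᵥ v) = star v ⬝ᵥ ((Rᴴ * R) *ᵥ v) := by
      rw [← Matrix.mulVec_mulVec, Matrix.dotProduct_mulVec (star v), ← Matrix.star_mulVec,
        Matrix.dotProduct_mulVec]
    have e3 : star v ⬝ᵥ ((Rᴴ * R) *ᵥ v)
        = (t : ℂ) * (∑ k, (Complex.normSq (v k) : ℂ)) - star c * c := by
      rw [hR]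
      rw [Matrix.sub_mulVec, Matrix.smul_mulVec, Matrix.one_mulVec, dotProduct_sub]
      congr 1
      · rw [dotProduct_smul]
        simp only [smul_eq_mul]
        congr 1
        simp only [dotProduct, Pi.star_apply]
        exact Finset.sum_congr rfl fun l _ => Complex.normSq_eq_conj_mul_self.symm
      · have e4 : (Matrix.of fun a b => s a * star (s b)) *ᵥ v = fun a => s a * c := by
          funext a
          simp only [Matrix.mulVec, dotProduct, Matrix.of_apply, hc]
          rw [Finset.mul_sum]
          exact Finset.sum_congr rfl fun b _ => by
            simp only [Complex.star_def]; ring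
        rw [e4]
        have e6 : (∑ x, star (v x) * s x) = star c := by
          rw [hc, star_sum]
          exact Finset.sum_congr rfl fun k _ => by
            simp only [Complex.star_def, RingHom.map_mul, Complex.conj_conj]
            ring
        have e5 : star v ⬝ᵥ (fun a => s a * c) = star c * c := by
          simp only [dotProduct, Pi.star_apply]
          calc ∑ x, star (v x) * (s x * c) = (∑ x, star (v x) * s x) * c := by
                rw [Finset.sum_mul]
                exact Finset.sum_congr rfl fun x _ => (mul_assoc _ _ _).symm
            _ = star c * c := by rw [e6]
        rw [e5]
    rw [e1, e2, e3]
    have e7 : star c * c = (Complex.normSq c : ℂ) := by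
      rw [Complex.star_def, ← Complex.normSq_eq_conj_mul_self]
    rw [e7]
    push_cast
    ring
  have hs2 : ∀ k, 2 ≤ Complex.normSq (s k) := fun k => (qam_normSq (hs k)).1
  have hs18 : ∀ k, Complex.normSq (s k) ≤ 18 := fun k => (qam_normSq (hs k)).2
  have hstld18 : ∀ k, Complex.normSq (stld k) ≤ 18 := fun k => (qam_normSq (hstld k)).2
  -- diagonal entries of R below the last index are nonzero
  have hdiag : ∀ l : Fin T, (l : ℕ) + 1 < T → R l l ≠ 0 := by
    intro l hl hR0
    set n : ℕ := (l : ℕ) + 1 with hn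
    have hnT : n ≤ T := hl.le
    set Bm : Matrix (Fin n) (Fin n) ℂ :=
      R.submatrix (Fin.castLE hnT) (Fin.castLE hnT) with hBm
    have hBtri : Bm.BlockTriangular id := by
      intro a b hba
      refine hupper _ _ ?_
      rw [Fin.lt_def]
      exact hba
    have hBdet : Bm.det = 0 := by
      rw [Matrix.det_of_upperTriangular hBtri]
      refine Finset.prod_eq_zero (Finset.mem_univ (⟨(l : ℕ), by omega⟩ : Fin n)) ?_
      have hcast : Fin.castLE hnT (⟨(l : ℕ), by omega⟩ : Fin n) = l := by
        apply Fin.ext; rfl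
      rw [hBm, Matrix.submatrix_apply, hcast]
      exact hR0
    obtain ⟨v, hv0, hvker⟩ := Matrix.exists_mulVec_eq_zero_iff.2 hBdet
    set v' : Fin T → ℂ := fun k => if h : (k : ℕ) < n then v ⟨(k : ℕ), h⟩ else 0 with hv'
    have hv'zero : ∀ b : Fin T, n ≤ (b : ℕ) → v' b = 0 := by
      intro b hb
      simp [hv', not_lt.2 hb]
    have hRv' : R *ᵥ v' = 0 := by
      funext m
      rw [Pi.zero_apply]
      by_cases hm : (m : ℕ) < n
      · have hsupp : ∀ b : Fin T, n ≤ (b : ℕ) → R m b * v' b = 0 := by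
          intro b hb; rw [hv'zero b hb, mul_zero]
        have : (R *ᵥ v') m = ∑ b : Fin n, R m (Fin.castLE hnT b) * v' (Fin.castLE hnT b) :=
          sum_fin_restrict hnT _ hsupp
        rw [this]
        have : ∀ b : Fin n, R m (Fin.castLE hnT b) * v' (Fin.castLE hnT b)
            = Bm ⟨(m : ℕ), hm⟩ b * v b := by
          intro b
          have h1 : v' (Fin.castLE hnT b) = v b := by
            simp only [hv']
            rw [dif_pos (by simpa using b.2)]
            exact congrArg v (Fin.ext rfl)
          have h2 : R m (Fin.castLE hnT b) = Bm ⟨(m : ℕ), hm⟩ b := by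
            have hcast : Fin.castLE hnT (⟨(m : ℕ), hm⟩ : Fin n) = m := by apply Fin.ext; rfl
            rw [hBm, Matrix.submatrix_apply, hcast]
          rw [h1, h2]
        rw [Finset.sum_congr rfl fun b _ => this b]
        have := congrFun hvker ⟨(m : ℕ), hm⟩
        simpa [Matrix.mulVec, dotProduct] using this
      · simp only [Matrix.mulVec, dotProduct]
        apply Finset.sum_eq_zero
        intro b _
        by_cases hb : (b : ℕ) < n
        · have : R m b = 0 := hupper m b (by rw [Fin.lt_def]; omega)
          rw [this, zero_mul]
        · rw [hv'zero b (not_lt.1 hb), mul_zero]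
    -- plug into the quadratic identity
    have hkey := key v'
    rw [hRv'] at hkey
    simp only [Pi.zero_apply, Complex.normSq_zero, Finset.sum_const_zero] at hkey
    -- the support set
    set A : Finset (Fin T) := Finset.univ.filter (fun k => (k : ℕ) < n) with hA
    have hcs : Complex.normSq (∑ k, (starRingEnd ℂ) (s k) * v' k)
        ≤ (∑ k ∈ A, Complex.normSq (s k)) * (∑ k ∈ A, Complex.normSq (v' k)) := by
      have hrestr : (∑ k, (starRingEnd ℂ) (s k) * v' k)
          = ∑ k ∈ A, (starRingEnd ℂ) (s k) * v' k := by
        apply (Finset.sum_subset (Finset.subset_univ A) ?_).symm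
        intro b _ hb
        have : n ≤ (b : ℕ) := by
          by_contra hc
          exact hb (by simp [hA, not_le.1 hc])
        rw [hv'zero b this, mul_zero]
      rw [hrestr]
      calc Complex.normSq (∑ k ∈ A, (starRingEnd ℂ) (s k) * v' k)
          ≤ (∑ k ∈ A, Complex.normSq ((starRingEnd ℂ) (s k))) * (∑ k ∈ A, Complex.normSq (v' k)) :=
            normSq_sum_mul_le A _ _
        _ = (∑ k ∈ A, Complex.normSq (s k)) * (∑ k ∈ A, Complex.normSq (v' k)) := by
            simp [Complex.normSq_conj]
    have hAsum : ∑ k ∈ A, Complex.normSq (v' k) = ∑ k, Complex.normSq (v' k) := by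
      apply Finset.sum_subset (Finset.subset_univ A)
      intro b _ hb
      have : n ≤ (b : ℕ) := by
        by_contra hc
        exact hb (by simp [hA, not_le.1 hc])
      rw [hv'zero b this, Complex.normSq_zero]
    have hAle : ∑ k ∈ A, Complex.normSq (s k) ≤ t - 2 := by
      have hsplit := Finset.sum_filter_add_sum_filter_not Finset.univ
        (fun k : Fin T => (k : ℕ) < n) (fun k => Complex.normSq (s k))
      have hk0 : (⟨T - 1, by omega⟩ : Fin T) ∈
          Finset.univ.filter (fun k : Fin T => ¬ (k : ℕ) < n) := by
        simp only [Finset.mem_filter, Finset.mem_univ, true_and, not_lt]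
        omega
      have h2 : 2 ≤ ∑ k ∈ Finset.univ.filter (fun k : Fin T => ¬ (k : ℕ) < n),
          Complex.normSq (s k) := by
        calc (2:ℝ) ≤ Complex.normSq (s ⟨T - 1, by omega⟩) := hs2 _
          _ ≤ _ := Finset.single_le_sum (fun k _ => Complex.normSq_nonneg (s k)) hk0
      rw [← hA] at hsplit
      have htt : t = ∑ k : Fin T, Complex.normSq (s k) := ht
      linarith [hsplit, htt.ge, htt.le]
    have hSigpos : 0 < ∑ k, Complex.normSq (v' k) := by
      obtain ⟨m, hm⟩ := Function.ne_iff.1 hv0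
      refine Finset.sum_pos' (fun k _ => Complex.normSq_nonneg _) ⟨Fin.castLE hnT m,
        Finset.mem_univ _, ?_⟩
      have : v' (Fin.castLE hnT m) = v m := by
        simp only [hv']
        rw [dif_pos (by simpa using m.2)]
        exact congrArg v (Fin.ext rfl)
      rw [this]
      simpa [Complex.normSq_pos] using hm
    have hmul : (∑ k ∈ A, Complex.normSq (s k)) * (∑ k, Complex.normSq (v' k))
        ≤ (t - 2) * (∑ k, Complex.normSq (v' k)) :=
      mul_le_mul_of_nonneg_right hAle hSigpos.le
    rw [hAsum] at hcs
    nlinarith [hkey, hcs, hmul, hSigpos]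
  -- a general splitting lemma for sums over `Fin T`
  have hsplit3 : ∀ {M : Type} [AddCommMonoid M] (c : Fin T) (f : Fin T → M),
      ∑ k, f k = ((∑ k ∈ Finset.Iio c, f k) + f c) + ∑ k ∈ Finset.Ioi c, f k := by
    intro M _ c f
    have h1 : Finset.Iio c = Finset.univ.filter (fun k => k < c) := by ext k; simp
    have h2 : Finset.Ici c = Finset.univ.filter (fun k => ¬ k < c) := by ext k; simp [not_lt]
    calc ∑ k, f k = (∑ k ∈ Finset.Iio c, f k) + ∑ k ∈ Finset.Ici c, f k := by
          rw [h1, h2, Finset.sum_filter_add_sum_filter_not]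
      _ = ((∑ k ∈ Finset.Iio c, f k) + f c) + ∑ k ∈ Finset.Ioi c, f k := by
          rw [Finset.Ici_eq_cons_Ioi, Finset.sum_cons, add_assoc]
  intro j hj
  have hJT : (j : ℕ) ≤ T := j.2.le
  have hJi : (j : ℕ) ≤ (i : ℕ) := hj
  -- the leading block of R is invertible
  set Bm : Matrix (Fin (j:ℕ)) (Fin (j:ℕ)) ℂ :=
    R.submatrix (Fin.castLE hJT) (Fin.castLE hJT) with hBm
  have hBtri : Bm.BlockTriangular id := by
    intro a b hba
    refine hupper _ _ ?_
    rw [Fin.lt_def]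
    exact hba
  have hBdet : IsUnit Bm.det := by
    rw [Matrix.det_of_upperTriangular hBtri, isUnit_iff_ne_zero, Finset.prod_ne_zero_iff]
    intro m _
    have hm : ((Fin.castLE hJT m : Fin T) : ℕ) + 1 < T := by
      have h1 : (m : ℕ) < (j : ℕ) := m.2
      have h2 : ((Fin.castLE hJT m : Fin T) : ℕ) = (m : ℕ) := rfl
      omega
    have := hdiag _ hm
    rw [hBm, Matrix.submatrix_apply]
    exact this
  set u : Fin T → ℂ := fun k => if j ≤ k then stld k else 0 with hu
  set w' : Fin (j:ℕ) → ℂ := Bm⁻¹ *ᵥ (fun m => -((R *ᵥ u) (Fin.castLE hJT m))) with hw'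
  set w : Fin T → ℂ := fun b => if h : (b:ℕ) < (j:ℕ) then w' ⟨(b:ℕ), h⟩ else 0 with hw
  set v : Fin T → ℂ := fun b => u b + w b with hv
  have hwzero : ∀ b : Fin T, (j:ℕ) ≤ (b:ℕ) → w b = 0 := by
    intro b hb
    simp only [hw]
    rw [dif_neg (not_lt.2 hb)]
  have hBw : Bm *ᵥ w' = fun m => -((R *ᵥ u) (Fin.castLE hJT m)) := by
    rw [hw', Matrix.mulVec_mulVec, Matrix.mul_nonsing_inv _ hBdet, Matrix.one_mulVec]
  have hv_high : ∀ k : Fin T, j ≤ k → v k = stld k := by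
    intro k hk
    have h1 : ¬ ((k:ℕ) < (j:ℕ)) := not_lt.2 hk
    simp only [hv, hu, hw]
    rw [if_pos hk, dif_neg h1, add_zero]
  have hRv_high : ∀ l : Fin T, j ≤ l → (R *ᵥ v) l = (R *ᵥ stld) l := by
    intro l hl
    simp only [Matrix.mulVec, dotProduct]
    apply Finset.sum_congr rfl
    intro b _
    by_cases hb : j ≤ b
    · rw [hv_high b hb]
    · have : R l b = 0 := hupper l b (lt_of_lt_of_le (not_le.1 hb) hl)
      rw [this, zero_mul, zero_mul]
  have hRv_low : ∀ l : Fin T, (l : ℕ) < (j:ℕ) → (R *ᵥ v) l = 0 := by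
    intro l hl
    have hvdef : v = u + w := rfl
    have hRw : (R *ᵥ w) l = -((R *ᵥ u) l) := by
      have h1 : (R *ᵥ w) l = ∑ m : Fin (j:ℕ), R l (Fin.castLE hJT m) * w (Fin.castLE hJT m) :=
        sum_fin_restrict hJT _ (fun b hb => by rw [hwzero b hb, mul_zero])
      have h2 : ∀ m : Fin (j:ℕ), R l (Fin.castLE hJT m) * w (Fin.castLE hJT m)
          = Bm ⟨(l:ℕ), hl⟩ m * w' m := by
        intro m
        have e1 : w (Fin.castLE hJT m) = w' m := by
          simp only [hw]
          rw [dif_pos (by simpa using m.2)]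
          exact congrArg w' (Fin.ext rfl)
        have e2 : R l (Fin.castLE hJT m) = Bm ⟨(l:ℕ), hl⟩ m := by
          have hcast : Fin.castLE hJT (⟨(l:ℕ), hl⟩ : Fin (j:ℕ)) = l := by apply Fin.ext; rfl
          rw [hBm, Matrix.submatrix_apply, hcast]
        rw [e1, e2]
      rw [h1, Finset.sum_congr rfl fun m _ => h2 m]
      have h3 := congrFun hBw ⟨(l:ℕ), hl⟩
      have h4 : Fin.castLE hJT (⟨(l:ℕ), hl⟩ : Fin (j:ℕ)) = l := by apply Fin.ext; rfl
      rw [h4] at h3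
      simpa [Matrix.mulVec, dotProduct] using h3
    rw [hvdef, Matrix.mulVec_add, Pi.add_apply, hRw]
    ring
  -- numerator equals the full quadratic form of `v`
  have hnum1 : ∑ l ∈ Finset.Ici j, Complex.normSq ((R *ᵥ stld) l)
      = ∑ l ∈ Finset.Ici j, Complex.normSq ((R *ᵥ v) l) :=
    Finset.sum_congr rfl fun l hl => by rw [hRv_high l (Finset.mem_Ici.1 hl)]
  have hnum2 : ∑ l ∈ Finset.Ici j, Complex.normSq ((R *ᵥ v) l)
      = ∑ l, Complex.normSq ((R *ᵥ v) l) := by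
    apply Finset.sum_subset (Finset.subset_univ _)
    intro l _ hl
    have hlj : (l : ℕ) < (j : ℕ) := by
      have := Finset.mem_Ici.not.1 hl
      rw [Fin.le_def, not_le] at this
      exact this
    rw [hRv_low l hlj, Complex.normSq_zero]
  set d : Fin T → ℂ := fun k => v k - s k with hd
  have hvd : v = fun k => s k + d k := by
    funext k
    simp only [hd]
    ring
  have hnum3 : (∑ l, Complex.normSq ((R *ᵥ v) l))
      = t * (∑ k, Complex.normSq (d k)) -
        Complex.normSq (∑ k, (starRingEnd ℂ) (s k) * d k) := by
    rw [key v]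
    calc t * (∑ k, Complex.normSq (v k)) -
          Complex.normSq (∑ k, (starRingEnd ℂ) (s k) * v k)
        = t * (∑ k, Complex.normSq (s k + d k)) -
          Complex.normSq (∑ k, (starRingEnd ℂ) (s k) * (s k + d k)) := by
          rw [hvd]
      _ = _ := quad_shift s d
  -- scalar data
  set aa : ℝ := ∑ k ∈ Finset.Ioi i, Complex.normSq (s k) with haa
  set sg : ℝ := Complex.normSq (s i) with hsg
  set KK : ℝ := ∑ k ∈ Finset.Iio i, Complex.normSq (s k) with hKK
  set BB : ℝ := ∑ k ∈ Finset.Iio i, Complex.normSq (d k) with hBB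
  set GG : ℝ := Complex.normSq (d i) with hGG
  set c1 : ℂ := ∑ k ∈ Finset.Iio i, (starRingEnd ℂ) (s k) * d k with hc1
  have hd_high : ∀ k : Fin T, i < k → d k = 0 := by
    intro k hk
    have hjk : j ≤ k := le_of_lt (lt_of_le_of_lt hj hk)
    simp only [hd]
    rw [hv_high k hjk, htail k hk, sub_self]
  have hdi : d i = stld i - s i := by
    simp only [hd]
    rw [hv_high i hj]
  have hsum_d : ∑ k, Complex.normSq (d k) = BB + GG := by
    rw [hsplit3 i (fun k => Complex.normSq (d k))]
    have : ∑ k ∈ Finset.Ioi i, Complex.normSq (d k) = 0 :=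
      Finset.sum_eq_zero fun k hk => by
        rw [hd_high k (Finset.mem_Ioi.1 hk), Complex.normSq_zero]
    rw [this, add_zero, hBB, hGG]
  have hsum_c : ∑ k, (starRingEnd ℂ) (s k) * d k = c1 + (starRingEnd ℂ) (s i) * d i := by
    rw [hsplit3 i (fun k => (starRingEnd ℂ) (s k) * d k)]
    have : ∑ k ∈ Finset.Ioi i, (starRingEnd ℂ) (s k) * d k = 0 :=
      Finset.sum_eq_zero fun k hk => by
        rw [hd_high k (Finset.mem_Ioi.1 hk), mul_zero]
    rw [this, add_zero, hc1]
  have ht_eq : t = KK + aa + sg := by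
    rw [ht, hsplit3 i (fun k => Complex.normSq (s k)), hKK, haa, hsg]
    ring
  -- bounds on the scalar data
  have hGG4 : 4 ≤ GG := by
    rw [hGG, hdi]
    exact qam_diff_normSq (hstld i) (hs i) hne
  have haa2 : 2 ≤ aa := by
    have hmem : (⟨(i:ℕ)+1, hi⟩ : Fin T) ∈ Finset.Ioi i := by
      rw [Finset.mem_Ioi, Fin.lt_def]
      simp
    calc (2:ℝ) ≤ Complex.normSq (s ⟨(i:ℕ)+1, hi⟩) := hs2 _
      _ ≤ aa := Finset.single_le_sum (fun k _ => Complex.normSq_nonneg (s k)) hmem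
  have hsg2 : 2 ≤ sg := hs2 i
  have hsg18 : sg ≤ 18 := hs18 i
  have hKK0 : 0 ≤ KK := Finset.sum_nonneg fun k _ => Complex.normSq_nonneg (s k)
  have hBB0 : 0 ≤ BB := Finset.sum_nonneg fun k _ => Complex.normSq_nonneg (d k)
  -- Cauchy–Schwarz on the head part
  set x : ℝ := norm c1 with hx
  set y : ℝ := norm ((starRingEnd ℂ) (s i) * d i) with hy
  have hx2 : x ^ 2 ≤ KK * BB := by
    rw [hx, Complex.sq_norm, hc1]
    calc Complex.normSq (∑ k ∈ Finset.Iio i, (starRingEnd ℂ) (s k) * d k)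
        ≤ (∑ k ∈ Finset.Iio i, Complex.normSq ((starRingEnd ℂ) (s k))) *
            (∑ k ∈ Finset.Iio i, Complex.normSq (d k)) := normSq_sum_mul_le _ _ _
      _ = KK * BB := by rw [hKK, hBB]; simp [Complex.normSq_conj]
  have hy2 : y ^ 2 = sg * GG := by
    rw [hy, Complex.sq_norm, Complex.normSq_mul, Complex.normSq_conj, hsg, hGG]
  have htri : Complex.normSq (c1 + (starRingEnd ℂ) (s i) * d i) ≤ (x + y) ^ 2 := by
    rw [← Complex.sq_norm]
    have habs : norm (c1 + (starRingEnd ℂ) (s i) * d i) ≤ x + y :=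
      norm_add_le _ _
    exact pow_le_pow_left₀ (norm_nonneg _) habs 2
  have hsc := scalar_ineq KK aa sg BB GG x y hKK0 (by linarith) (by linarith) hBB0
    (by linarith) (norm_nonneg _) (norm_nonneg _) hx2 hy2
  -- numerator lower bound
  set N : ℝ := ∑ l ∈ Finset.Ici j, Complex.normSq ((R *ᵥ stld) l) with hN
  have hNval : N = t * (BB + GG) - Complex.normSq (c1 + (starRingEnd ℂ) (s i) * d i) := by
    rw [hnum1, hnum2, hnum3, hsum_d, hsum_c]
  have hNge : GG * t * aa ≤ (aa + sg) * N := by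
    have h1 : t * (BB + GG) - (x + y) ^ 2 ≤ N := by
      rw [hNval]; linarith
    have h2 : (aa + sg) * (t * (BB + GG) - (x + y) ^ 2) ≤ (aa + sg) * N :=
      mul_le_mul_of_nonneg_left h1 (by linarith)
    have h3 : GG * t * aa ≤ (aa + sg) * (t * (BB + GG) - (x + y) ^ 2) := by
      have := hsc
      rw [← ht_eq] at this
      linarith
    linarith
  -- denominator bounds
  set D : ℝ := 18 * ((j:ℕ) : ℝ) + ∑ k ∈ Finset.Ici j, Complex.normSq (stld k) with hD
  have hsum_stld_le : ∑ k ∈ Finset.Ici j, Complex.normSq (stld k) ≤ 18 * (T - (j:ℕ)) := by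
    calc ∑ k ∈ Finset.Ici j, Complex.normSq (stld k)
        ≤ ∑ _k ∈ Finset.Ici j, (18:ℝ) := Finset.sum_le_sum fun k _ => hstld18 k
      _ = (Finset.Ici j).card * 18 := by rw [Finset.sum_const, nsmul_eq_mul]
      _ = ((T - (j:ℕ) : ℕ) : ℝ) * 18 := by rw [Fin.card_Ici]
      _ = 18 * (T - (j:ℕ)) := by
          rw [Nat.cast_sub hJT]
          ring
  have hDle : D ≤ 18 * T := by
    rw [hD]
    have hj0 : (0:ℝ) ≤ ((j:ℕ) : ℝ) := Nat.cast_nonneg _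
    linarith
  have hDpos : 0 < D := by
    rw [hD]
    have h1 : (2:ℝ) ≤ ∑ k ∈ Finset.Ici j, Complex.normSq (stld k) := by
      calc (2:ℝ) ≤ Complex.normSq (stld j) := (qam_normSq (hstld j)).1
        _ ≤ _ := Finset.single_le_sum (fun k _ => Complex.normSq_nonneg (stld k))
            (Finset.mem_Ici.2 le_rfl)
    have hj0 : (0:ℝ) ≤ ((j:ℕ) : ℝ) := Nat.cast_nonneg _
    linarith
  have ht2T : 2 * (T:ℝ) ≤ t := by
    rw [ht]
    calc 2 * (T:ℝ) = ∑ _k : Fin T, (2:ℝ) := by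
          rw [Finset.sum_const, nsmul_eq_mul]
          simp [mul_comm]
      _ ≤ ∑ k, Complex.normSq (s k) := Finset.sum_le_sum fun k _ => hs2 k
  have hN0 : 0 ≤ N := Finset.sum_nonneg fun l _ => Complex.normSq_nonneg _
  -- conclude
  rw [ge_iff_le, div_le_div_iff₀ (by norm_num : (0:ℝ) < 45) hDpos]
  have hT0 : (0:ℝ) ≤ (T:ℝ) := Nat.cast_nonneg _
  have hstep1 : 2 * D * (aa + sg) ≤ 36 * (T:ℝ) * (aa + sg) := by
    have : 2 * D ≤ 36 * (T:ℝ) := by linarith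
    exact mul_le_mul_of_nonneg_right this (by linarith)
  have hstep2 : 36 * (T:ℝ) * (aa + sg) ≤ 360 * (T:ℝ) * aa := by
    have h9 : sg ≤ 9 * aa := by linarith
    nlinarith [mul_nonneg hT0 (by linarith : (0:ℝ) ≤ 9 * aa - sg)]
  have hstep3 : 360 * (T:ℝ) * aa ≤ 45 * (GG * t * aa) := by
    have h1 : 4 * (2 * (T:ℝ)) ≤ GG * t := by
      calc 4 * (2 * (T:ℝ)) ≤ GG * (2 * (T:ℝ)) :=
            mul_le_mul_of_nonneg_right hGG4 (by linarith)
        _ ≤ GG * t := mul_le_mul_of_nonneg_left ht2T (by linarith)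
    nlinarith [mul_le_mul_of_nonneg_right h1 (by linarith : (0:ℝ) ≤ aa)]
  have hstep4 : 45 * (GG * t * aa) ≤ 45 * ((aa + sg) * N) := by linarith
  have hfinal : 2 * D * (aa + sg) ≤ N * 45 * (aa + sg) := by nlinarith
  exact le_of_mul_le_mul_right hfinal (by linarith : (0:ℝ) < aa + sg)
end

section
/- For every sequence s ∈ Ω₁₆^T with T ≥ 2 and every index i with 1 ≤ i ≤ T − 1, one has ‖s‖² · (1 − |s_i|²/τ_i) ≥ T/5, where τ_i = Σ_{k=i}^T |s_k|². -/
/-! Writing `τ_i = |s_i|² + R` with `R` the energy strictly after `i`, one has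
`1 − |s_i|²/τ_i = R/(|s_i|² + R)`. If every symbol energy lies in `[m, M]` and some index
follows `i`, then `R ≥ m` and `|s_i|² ≤ M`, so this factor is at least `m/(M + m)`, while
`‖s‖² ≥ mT`. For 16-QAM, `m = 2` and `M = 18` give `mT · m/(M + m) = T/5`. -/

open Finset

lemma QAM16_normSq_mem_Icc {z : ℂ} (hz : z ∈ QAM16) : Complex.normSq z ∈ Set.Icc 2 18 := by
  obtain ⟨a, ha, b, hb, rfl⟩ := hz
  rw [Complex.normSq_add_mul_I]
  simp only [Set.mem_insert_iff, Set.mem_singleton_iff] at ha hb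
  rcases ha with rfl | rfl | rfl | rfl <;> rcases hb with rfl | rfl | rfl | rfl <;> norm_num

lemma div_add_le_one_sub_div_add {x R m M : ℝ} (hm : 0 < m) (hx₀ : 0 ≤ x) (hxM : x ≤ M)
    (hR : m ≤ R) : m / (M + m) ≤ 1 - x / (x + R) := by
  have hxR : 0 < x + R := by linarith
  rw [one_sub_div hxR.ne', add_sub_cancel_left, div_le_div_iff₀ (by linarith) hxR]
  nlinarith

lemma card_mul_mul_div_le_sum_mul_one_sub_div_sum_Ici {ι : Type*} [Fintype ι] [LinearOrder ι]
    [LocallyFiniteOrderTop ι] {f : ι → ℝ} {m M : ℝ} (hm : 0 < m)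
    (hf : ∀ k, f k ∈ Set.Icc m M) {i j : ι} (hij : i < j) :
    Fintype.card ι * m * (m / (M + m)) ≤
      (∑ k, f k) * (1 - f i / ∑ k ∈ Ici i, f k) := by
  have hf₀ : ∀ k, 0 ≤ f k := fun k => hm.le.trans (hf k).1
  have htotal : Fintype.card ι * m ≤ ∑ k, f k := by
    simpa [nsmul_eq_mul] using card_nsmul_le_sum univ f m fun k _ => (hf k).1
  have htail : m ≤ ∑ k ∈ Ioi i, f k :=
    (hf j).1.trans (single_le_sum (fun k _ => hf₀ k) (mem_Ioi.mpr hij))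
  rw [← add_sum_Ioi_eq_sum_Ici]
  exact mul_le_mul htotal (div_add_le_one_sub_div_add hm (hf₀ i) (hf i).2 htail)
    (div_nonneg hm.le (by linarith [(hf i).1, (hf i).2])) (sum_nonneg fun k _ => hf₀ k)

theorem QAM16_diag_lower_bound_general (T : ℕ)
    (s : Fin T → ℂ) (hs : ∀ k, s k ∈ QAM16)
    (i : Fin T) (hi : (i : ℕ) + 1 < T) :
    (∑ k : Fin T, Complex.normSq (s k)) *
      (1 - Complex.normSq (s i) / (∑ k ∈ Finset.Ici i, Complex.normSq (s k))) ≥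
    (T : ℝ) / 5 := by
  have hij : i < ⟨i + 1, hi⟩ := Fin.mk_lt_mk.mpr i.val.lt_succ_self
  have h := card_mul_mul_div_le_sum_mul_one_sub_div_sum_Ici two_pos
    (fun k => QAM16_normSq_mem_Icc (hs k)) (M := 18) hij
  rw [Fintype.card_fin] at h
  linarith

/-- **Key estimate in the proof of Lemma 4 of the paper.**
For every 16-QAM sequence `s ∈ Ω₁₆^T` with `T ≥ 2` and every index `1 ≤ i ≤ T − 1`
(`0`-based: `(i : ℕ) + 1 < T`), one has `‖s‖² (1 − |s_i|²/τ_i) ≥ T/5`, where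
`τ_i = ∑_{k ≥ i} |s_k|²`. -/
theorem QAM16_diag_lower_bound (T : ℕ) (hT : 2 ≤ T)
    (s : Fin T → ℂ) (hs : ∀ k, s k ∈ QAM16)
    (i : Fin T) (hi : (i : ℕ) + 1 < T) :
    (∑ k : Fin T, Complex.normSq (s k)) *
      (1 - Complex.normSq (s i) / (∑ k ∈ Finset.Ici i, Complex.normSq (s k))) ≥
    (T : ℝ) / 5 :=
  QAM16_diag_lower_bound_general T s hs i hi
end

section
/- The normalized partial metric lower-bounds the full normalized metric: let R be any complex T×T matrix and let s ∈ ℂ^T be nonzero with |s_k|² ≤ 18 for all k. Then for every index i with 1 ≤ i ≤ T, (Σ_{l=i}^T |(R s)_l|²)/(18·(i − 1) + Σ_{k=i}^T |s_k|²) ≤ ‖R s‖²/‖s‖². -/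
open Matrix Finset

theorem Finset.sum_Iio_add_sum_Ici {α M : Type*} [LinearOrder α] [Fintype α]
    [LocallyFiniteOrderBot α] [LocallyFiniteOrderTop α] [AddCommMonoid M] (f : α → M) (a : α) :
    ∑ x ∈ Iio a, f x + ∑ x ∈ Ici a, f x = ∑ x, f x := by
  rw [← sum_union (disjoint_left.2 fun x hx hx' => (mem_Ici.1 hx').not_gt (mem_Iio.1 hx))]
  congr
  ext x
  simp only [mem_union, mem_Iio, mem_Ici, mem_univ, iff_true]
  exact lt_or_ge x a

theorem Fin.sum_le_mul_add_sum_Ici {n : ℕ} {f : Fin n → ℝ} {c : ℝ} (hf : ∀ k, f k ≤ c)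
    (i : Fin n) : ∑ k, f k ≤ c * i + ∑ k ∈ Ici i, f k := by
  rw [← sum_Iio_add_sum_Ici f i]
  gcongr
  calc ∑ k ∈ Iio i, f k ≤ #(Iio i) • c := sum_le_card_nsmul _ _ _ fun k _ => hf k
    _ = c * i := by rw [Fin.card_Iio, nsmul_eq_mul, mul_comm]

theorem Complex.sum_normSq_pos {ι : Type*} [Fintype ι] {s : ι → ℂ} (hs : s ≠ 0) :
    0 < ∑ k, normSq (s k) := by
  obtain ⟨k, hk⟩ := Function.ne_iff.1 hs
  exact sum_pos' (fun _ _ => normSq_nonneg _) ⟨k, mem_univ k, normSq_pos.2 hk⟩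

/-- `i` is `0`-based, so the paper's `18 (i - 1)` appears as `18 * (i : ℕ)`. -/
theorem normalized_partial_metric_le_full (T : ℕ) (R : Matrix (Fin T) (Fin T) ℂ)
    (s : Fin T → ℂ) (hs : s ≠ 0) (hbound : ∀ k, Complex.normSq (s k) ≤ 18) :
    ∀ i : Fin T,
      (∑ l ∈ Finset.Ici i, Complex.normSq ((R *ᵥ s) l)) /
        (18 * (i : ℕ) + ∑ k ∈ Finset.Ici i, Complex.normSq (s k)) ≤
      (∑ l : Fin T, Complex.normSq ((R *ᵥ s) l)) / (∑ k : Fin T, Complex.normSq (s k)) :=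
  fun i => div_le_div₀ (sum_nonneg fun _ _ => Complex.normSq_nonneg _)
    (sum_le_univ_sum_of_nonneg fun _ => Complex.normSq_nonneg _) (Complex.sum_normSq_pos hs)
    (Fin.sum_le_mul_add_sum_Ici hbound i)
end

section
/- Full-sequence quadratic-form separation for constant-modulus sequences: let T ≥ 2 and let s, s̃ ∈ ℂ^T with |s_k| = |s̃_k| = 1 for all k. Suppose there is an index i with 1 ≤ i ≤ T − 1 such that s̃_i ≠ s_i and s̃_k = s_k for all k > i. Then s̃*(T·I − s s*) s̃ = T² − |s* s̃|² ≥ (T/2)·|s̃_i − s_i|². -/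
open Matrix Finset

lemma unit_star_mul {z : ℂ} (hz : ‖z‖ = 1) : star z * z = 1 := by
  have h : Complex.normSq z = 1 := by rw [← Complex.sq_norm, hz]; norm_num
  calc star z * z = z * (starRingEnd ℂ) z := by rw [mul_comm]; rfl
    _ = (Complex.normSq z : ℂ) := Complex.mul_conj z
    _ = 1 := by rw [h]; norm_num

lemma unit_normSq {z : ℂ} (hz : ‖z‖ = 1) : Complex.normSq z = 1 := by
  rw [← Complex.sq_norm, hz]; norm_num

/-- **Full-sequence quadratic-form separation for constant-modulus sequences**
(the `j = 1` case of Lemma 1 of the paper). If `s, s̃ ∈ ℂ^T` are unit-modulus,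
`s̃` differs from `s` at a largest index `i ≤ T − 1` (indices `0`-based, so
`1 ≤ i ≤ T−1` of the paper becomes `(i : ℕ) + 1 < T`), then
`s̃*(T·I − s s*) s̃ = T² − |s* s̃|² ≥ (T/2)·|s̃_i − s_i|²`. -/
theorem quadratic_form_separation (T : ℕ) (hT : 2 ≤ T)
    (s stld : Fin T → ℂ)
    (hs : ∀ k, ‖s k‖ = 1) (hstld : ∀ k, ‖stld k‖ = 1)
    (i : Fin T) (hi : (i : ℕ) + 1 < T)
    (hne : stld i ≠ s i) (htail : ∀ k : Fin T, i < k → stld k = s k) :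
    star stld ⬝ᵥ
        (((T : ℂ) • (1 : Matrix (Fin T) (Fin T) ℂ) -
          Matrix.of fun a b => s a * star (s b)) *ᵥ stld) =
      (((T : ℝ) ^ 2 - Complex.normSq (star s ⬝ᵥ stld) : ℝ) : ℂ) ∧
    (T : ℝ) ^ 2 - Complex.normSq (star s ⬝ᵥ stld) ≥
      (T : ℝ) / 2 * Complex.normSq (stld i - s i) := by
  have hc : star s ⬝ᵥ stld = ∑ k, star (s k) * stld k := by
    simp [dotProduct]
  set c : ℂ := star s ⬝ᵥ stld with hcdef
  constructor
  · -- identity part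
    have h1 : star stld ⬝ᵥ (((T : ℂ) • (1 : Matrix (Fin T) (Fin T) ℂ)) *ᵥ stld)
        = (T : ℂ) * (T : ℂ) := by
      simp only [smul_mulVec, one_mulVec, dotProduct_smul, smul_eq_mul]
      have h : star stld ⬝ᵥ stld = (T : ℂ) := by
        simp only [dotProduct, Pi.star_apply]
        have : ∀ k : Fin T, star (stld k) * stld k = 1 :=
          fun k => unit_star_mul (hstld k)
        rw [Finset.sum_congr rfl fun k _ => this k]
        simp
      rw [h]
    have h2 : star stld ⬝ᵥ ((Matrix.of fun a b => s a * star (s b)) *ᵥ stld)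
        = (starRingEnd ℂ) c * c := by
      have hconjc : (starRingEnd ℂ) c = ∑ a, (starRingEnd ℂ) (stld a) * s a := by
        rw [hc, map_sum]
        refine Finset.sum_congr rfl fun a _ => ?_
        simp only [_root_.map_mul, RCLike.star_def, Complex.conj_conj]
        ring
      simp only [dotProduct, mulVec, Matrix.of_apply, Pi.star_apply, RCLike.star_def]
      rw [hconjc, hc, Finset.sum_mul_sum]
      refine Finset.sum_congr rfl fun a _ => ?_
      rw [Finset.mul_sum]
      refine Finset.sum_congr rfl fun b _ => ?_
      simp only [RCLike.star_def]
      ring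
    rw [sub_mulVec, dotProduct_sub, h1, h2]
    rw [← Complex.normSq_eq_conj_mul_self]
    push_cast
    ring
  · -- inequality part
    set L : Fin T := ⟨T - 1, by omega⟩ with hL
    have hiL : i ≠ L := by
      intro h
      apply absurd hi
      simp [h, hL]
      omega
    have hiltL : i < L := by
      rw [Fin.lt_def]
      simp only [hL]
      omega
    have huL : star (s L) * stld L = 1 := by
      rw [htail L hiltL]; exact unit_star_mul (hs L)
    -- bound |c|
    set a : ℝ := ‖1 + star (s i) * stld i‖ with ha
    have hcbound : ‖c‖ ≤ a + (T - 2 : ℝ) := by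
      rw [hc]
      have hsplit : (Finset.univ : Finset (Fin T)) = insert i (insert L (Finset.univ \ {i, L})) := by
        rw [Finset.insert_eq, Finset.insert_eq, ← Finset.union_assoc, ← Finset.insert_eq]
        rw [Finset.union_comm, Finset.sdiff_union_self_eq_union]
        simp
      rw [hsplit, Finset.sum_insert (by simp [hiL]), Finset.sum_insert (by simp)]
      rw [← add_assoc]
      refine le_trans (norm_add_le _ _) ?_
      gcongr
      · rw [huL, add_comm]
      · refine le_trans (norm_sum_le _ _) ?_
        have hone : ∀ k ∈ Finset.univ \ ({i, L} : Finset (Fin T)),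
            ‖star (s k) * stld k‖ = 1 := by
          intro k _
          rw [show (star (s k) : ℂ) = (starRingEnd ℂ) (s k) from rfl,
            norm_mul, Complex.norm_conj, hs k, hstld k, mul_one]
        rw [Finset.sum_congr rfl hone]
        rw [Finset.sum_const, nsmul_eq_mul, mul_one]
        have hcard : (Finset.univ \ ({i, L} : Finset (Fin T))).card = T - 2 := by
          rw [Finset.card_sdiff_of_subset (by simp)]
          rw [Finset.card_pair hiL]
          simp
        rw [hcard]
        push_cast [Nat.cast_sub hT]
        norm_num
    have hu : Complex.normSq (star (s i) * stld i) = 1 := by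
      rw [Complex.normSq_mul,
        show (star (s i) : ℂ) = (starRingEnd ℂ) (s i) from rfl, Complex.normSq_conj,
        unit_normSq (hs i), unit_normSq (hstld i), mul_one]
    have ha2 : Complex.normSq (stld i - s i) = 4 - a ^ 2 := by
      have h1 : Complex.normSq (stld i - s i)
          = Complex.normSq (star (s i) * stld i - 1) := by
        have he : star (s i) * (stld i - s i) = star (s i) * stld i - 1 := by
          rw [mul_sub, unit_star_mul (hs i)]
        rw [← he, Complex.normSq_mul,
          show (star (s i) : ℂ) = (starRingEnd ℂ) (s i) from rfl, Complex.normSq_conj,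
          unit_normSq (hs i), one_mul]
      have hsum : Complex.normSq (star (s i) * stld i - 1)
          + Complex.normSq (1 + star (s i) * stld i) = 4 := by
        set u : ℂ := star (s i) * stld i
        have hu' : u.re ^ 2 + u.im ^ 2 = 1 := by
          have := hu
          rw [Complex.normSq_apply] at this
          nlinarith [this]
        simp only [Complex.normSq_apply, Complex.sub_re, Complex.sub_im, Complex.add_re,
          Complex.add_im, Complex.one_re, Complex.one_im]
        nlinarith [hu']
      rw [h1, ha, Complex.sq_norm]
      linarith [hsum]
    have hanneg : 0 ≤ a := norm_nonneg _
    have ha22 : a ≤ 2 := by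
      refine le_trans (norm_add_le _ _) ?_
      have h1 : ‖star (s i) * stld i‖ = 1 := by
        rw [show (star (s i) : ℂ) = (starRingEnd ℂ) (s i) from rfl,
          norm_mul, Complex.norm_conj, hs i, hstld i, mul_one]
      rw [h1, norm_one]
      norm_num
    have hcnn : 0 ≤ ‖c‖ := norm_nonneg _
    have hnc : Complex.normSq c = ‖c‖ ^ 2 := (Complex.sq_norm c).symm
    have hT2 : (2 : ℝ) ≤ (T : ℝ) := by exact_mod_cast hT
    rw [ha2, hnc]
    nlinarith [sq_nonneg (2 - a), sq_nonneg ‖c‖, hcbound,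
      mul_self_nonneg (a + (T : ℝ) - 2 - ‖c‖)]
end
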